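/- Every linear combination of positive compact operators between normed lattices E and F is a completely quasi Levi operator. -/

import Mathlib

/-- Order convergence of a net. -/
def OConvNet {ι F : Type*} [Preorder ι] [Lattice F] [AddCommGroup F]
    (x : ι → F) (x₀ : F) : Prop :=
  ∃ D : Set F, D.Nonempty ∧ DirectedOn (· ≥ ·) D ∧ IsGLB D 0 ∧
    ∀ y ∈ D, ∃ α₀, ∀ α, α₀ ≤ α → |x α - x₀| ≤ y

/-- Order convergence of a sequence. -/
def OConvSeq {F : Type*} [Lattice F] [AddCommGroup F] (x : ℕ → F) (x₀ : F) : Prop :=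
  ∃ y : ℕ → F, Antitone y ∧ IsGLB (Set.range y) 0 ∧
    ∀ m, ∃ n₀, ∀ n, n₀ ≤ n → |x n - x₀| ≤ y m

/-- A net is order-Cauchy if its double net of differences order converges to `0`. -/
def OCauchyNet {ι F : Type*} [Preorder ι] [Lattice F] [AddCommGroup F]
    (x : ι → F) : Prop :=
  OConvNet (fun p : ι × ι => x p.1 - x p.2) (0 : F)

/-- A sequence is order-Cauchy if its double sequence of differences order converges to `0`. -/
def OCauchySeq' {F : Type*} [Lattice F] [AddCommGroup F] (x : ℕ → F) : Prop :=
  OConvNet (fun p : ℕ × ℕ => x p.1 - x p.2) (0 : F)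

section Maps
variable {E F : Type*} [Lattice E] [AddCommGroup E] [Norm E] [Lattice F] [AddCommGroup F]

def IsLeviMap (T : E → F) : Prop :=
  ∀ (ι : Type) [Nonempty ι] [Preorder ι] [IsDirected ι (· ≤ ·)],
    ∀ x : ι → E, Monotone x → (∃ C, ∀ α, ‖x α‖ ≤ C) →
      ∃ x₀ : E, OConvNet (fun α => T (x α)) (T x₀)

def IsSigmaLeviMap (T : E → F) : Prop :=
  ∀ x : ℕ → E, Monotone x → (∃ C, ∀ n, ‖x n‖ ≤ C) →
    ∃ x₀ : E, OConvSeq (fun n => T (x n)) (T x₀)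

def IsCqLeviMap (T : E → F) : Prop :=
  ∀ (ι : Type) [Nonempty ι] [Preorder ι] [IsDirected ι (· ≤ ·)],
    ∀ x : ι → E, Monotone x → (∃ C, ∀ α, ‖x α‖ ≤ C) →
      ∃ y₀ : F, OConvNet (fun α => T (x α)) y₀

def IsCqSigmaLeviMap (T : E → F) : Prop :=
  ∀ x : ℕ → E, Monotone x → (∃ C, ∀ n, ‖x n‖ ≤ C) →
    ∃ y₀ : F, OConvSeq (fun n => T (x n)) y₀

def IsQLeviMap (T : E → F) : Prop :=
  ∀ (ι : Type) [Nonempty ι] [Preorder ι] [IsDirected ι (· ≤ ·)],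
    ∀ x : ι → E, Monotone x → (∃ C, ∀ α, ‖x α‖ ≤ C) →
      OCauchyNet (fun α => T (x α))

def IsQSigmaLeviMap (T : E → F) : Prop :=
  ∀ x : ℕ → E, Monotone x → (∃ C, ∀ n, ‖x n‖ ≤ C) →
    OCauchySeq' (fun n => T (x n))

end Maps

/-! A positive operator sends an increasing norm-bounded net to an increasing net, and a compact
operator sends it into a compact set, where it has a cluster point. Since the order of a normed
lattice is closed, that cluster point is the supremum of the image net, which therefore
order-converges to it. Sums and real multiples of order-convergent nets order-converge, so the
completely quasi Levi operators form a subspace, which then contains the span of the positive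
compact operators. -/

open Filter Set
open scoped Pointwise

section LatticeOrderedGroup
variable {α : Type*} [Lattice α] [AddCommGroup α] [IsOrderedAddMonoid α]

lemma nsmul_inf_eq_zero_of_inf_eq_zero {a b : α} (ha : 0 ≤ a) (hb : 0 ≤ b) (hab : a ⊓ b = 0)
    (n : ℕ) : n • a ⊓ b = 0 := by
  induction n with
  | zero => simpa using hb
  | succ n ih =>
    refine le_antisymm ?_ (le_inf (nsmul_nonneg ha _) hb)
    calc (n + 1) • a ⊓ b ≤ (n • a + a) ⊓ (n • a + b) ⊓ b := by
          rw [succ_nsmul]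
          exact le_inf (inf_le_inf_left _ (le_add_of_nonneg_left (nsmul_nonneg ha n))) inf_le_right
      _ = 0 := by rw [← add_inf, hab, add_zero, ih]

lemma nonneg_of_nsmul_nonneg {n : ℕ} (hn : n ≠ 0) {a : α} (h : 0 ≤ n • a) : 0 ≤ a := by
  have hneg : n • a⁻ ≤ n • a⁺ := by
    rwa [← posPart_sub_negPart a, nsmul_sub, sub_nonneg] at h
  have hle : a⁻ ≤ n • a⁺ ⊓ a⁻ := le_inf ((le_self_nsmul (negPart_nonneg a) hn).trans hneg) le_rfl
  rw [nsmul_inf_eq_zero_of_inf_eq_zero (posPart_nonneg a) (negPart_nonneg a)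
    (posPart_inf_negPart_eq_zero a)] at hle
  exact negPart_eq_zero.mp (le_antisymm hle (negPart_nonneg a))

variable [Module ℝ α]

lemma Rat.cast_smul_nonneg {q : ℚ} (hq : 0 ≤ q) {v : α} (hv : 0 ≤ v) : 0 ≤ (q : ℝ) • v := by
  lift q to ℚ≥0 using hq
  refine nonneg_of_nsmul_nonneg q.den_ne_zero ?_
  have hnum : (q.den : ℝ) * ((q : ℚ) : ℝ) = q.num := by exact_mod_cast q.den_mul_eq_num
  rw [← Nat.cast_smul_eq_nsmul ℝ, smul_smul, hnum, Nat.cast_smul_eq_nsmul]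
  exact nsmul_nonneg hv _

variable [TopologicalSpace α] [ContinuousSMul ℝ α] [ClosedIciTopology α]

-- Positivity passes from rational to real multiples because the positive cone is closed.
lemma real_smul_nonneg {c : ℝ} (hc : 0 ≤ c) {v : α} (hv : 0 ≤ v) : 0 ≤ c • v := by
  have hclosed : IsClosed {t : ℝ | 0 ≤ max t 0 • v} :=
    isClosed_Ici.preimage ((continuous_id.max continuous_const).smul continuous_const)
  have key : 0 ≤ max c 0 • v := Rat.denseRange_cast.induction_on c hclosed fun q => by
    rcases le_total 0 q with hq | hq
    · rw [max_eq_left (by exact_mod_cast hq)]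
      exact Rat.cast_smul_nonneg hq hv
    · rw [max_eq_right (by exact_mod_cast hq), zero_smul]
  rwa [max_eq_left hc] at key

instance PosSMulMono.real_of_closedIciTopology : PosSMulMono ℝ α :=
  PosSMulMono.of_smul_nonneg fun _ hc _ hv => real_smul_nonneg hc hv

end LatticeOrderedGroup

lemma abs_smul_le_abs_smul_abs {R M : Type*} [Ring R] [LinearOrder R] [IsOrderedRing R]
    [Lattice M] [AddCommGroup M] [IsOrderedAddMonoid M] [Module R M] [PosSMulMono R M]
    (c : R) (z : M) : |c • z| ≤ |c| • |z| := by
  rcases le_total 0 c with hc | hc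
  · rw [abs_of_nonneg hc, abs_le', ← smul_neg]
    exact ⟨smul_le_smul_of_nonneg_left (le_abs_self z) hc,
      smul_le_smul_of_nonneg_left (neg_le_abs z) hc⟩
  · have hc' : 0 ≤ -c := neg_nonneg.mpr hc
    rw [abs_of_nonpos hc, abs_le', ← neg_smul, ← neg_smul_neg c z]
    exact ⟨smul_le_smul_of_nonneg_left (neg_le_abs z) hc',
      smul_le_smul_of_nonneg_left (le_abs_self z) hc'⟩

namespace OConvNet
variable {ι F : Type*} [Preorder ι] [Lattice F] [AddCommGroup F] [IsOrderedAddMonoid F]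

lemma const [Nonempty ι] (y : F) : OConvNet (fun _ : ι => y) y :=
  ⟨{0}, singleton_nonempty 0, directedOn_singleton 0, isGLB_singleton,
    fun _ hz => ⟨Classical.arbitrary ι, fun _ _ => by simp [mem_singleton_iff.mp hz]⟩⟩

lemma add [IsDirected ι (· ≤ ·)] {f g : ι → F} {a b : F} (hf : OConvNet f a)
    (hg : OConvNet g b) : OConvNet (fun α => f α + g α) (a + b) := by
  obtain ⟨D₁, hne₁, hdir₁, hglb₁, hconv₁⟩ := hf
  obtain ⟨D₂, hne₂, hdir₂, hglb₂, hconv₂⟩ := hg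
  refine ⟨D₁ + D₂, hne₁.add hne₂, ?_, by simpa using hglb₁.add hglb₂, ?_⟩
  · rintro _ ⟨u₁, hu₁, u₂, hu₂, rfl⟩ _ ⟨v₁, hv₁, v₂, hv₂, rfl⟩
    obtain ⟨w₁, hw₁, hwu₁, hwv₁⟩ := hdir₁ u₁ hu₁ v₁ hv₁
    obtain ⟨w₂, hw₂, hwu₂, hwv₂⟩ := hdir₂ u₂ hu₂ v₂ hv₂
    exact ⟨w₁ + w₂, add_mem_add hw₁ hw₂, add_le_add hwu₁ hwu₂, add_le_add hwv₁ hwv₂⟩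
  · rintro _ ⟨u₁, hu₁, u₂, hu₂, rfl⟩
    obtain ⟨α₁, h₁⟩ := hconv₁ u₁ hu₁
    obtain ⟨α₂, h₂⟩ := hconv₂ u₂ hu₂
    obtain ⟨α₀, hα₁, hα₂⟩ := exists_ge_ge α₁ α₂
    refine ⟨α₀, fun α hα => ?_⟩
    calc |f α + g α - (a + b)| = |(f α - a) + (g α - b)| := by rw [add_sub_add_comm]
      _ ≤ |f α - a| + |g α - b| := abs_add_le _ _
      _ ≤ u₁ + u₂ := add_le_add (h₁ α (hα₁.trans hα)) (h₂ α (hα₂.trans hα))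

lemma const_smul {𝕜 : Type*} [Field 𝕜] [LinearOrder 𝕜] [IsStrictOrderedRing 𝕜] [Module 𝕜 F]
    [PosSMulMono 𝕜 F] {f : ι → F} {a : F} (hf : OConvNet f a) (c : 𝕜) :
    OConvNet (fun α => c • f α) (c • a) := by
  obtain ⟨D, hne, hdir, hglb, hconv⟩ := hf
  refine ⟨|c| • D, hne.smul_set, ?_, ?_, ?_⟩
  · rintro _ ⟨u, hu, rfl⟩ _ ⟨v, hv, rfl⟩
    obtain ⟨w, hw, hwu, hwv⟩ := hdir u hu v hv
    exact ⟨|c| • w, smul_mem_smul_set hw, smul_le_smul_of_nonneg_left hwu (abs_nonneg c),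
      smul_le_smul_of_nonneg_left hwv (abs_nonneg c)⟩
  · rcases eq_or_ne c 0 with rfl | hc
    · rw [abs_zero, zero_smul_set hne]
      exact isGLB_singleton
    · simpa using (OrderIso.smulRight (β := F) (abs_pos.2 hc)).isGLB_image'.2 hglb
  · rintro _ ⟨u, hu, rfl⟩
    obtain ⟨α₀, h⟩ := hconv u hu
    refine ⟨α₀, fun α hα => ?_⟩
    rw [← smul_sub]
    exact (abs_smul_le_abs_smul_abs c _).trans
      (smul_le_smul_of_nonneg_left (h α hα) (abs_nonneg c))

end OConvNet

lemma Monotone.isLUB_range_of_mapClusterPt {ι X : Type*} [Preorder ι] [Preorder X]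
    [TopologicalSpace X] [ClosedIciTopology X] [ClosedIicTopology X] {x : ι → X}
    (hx : Monotone x) {y : X} (hy : MapClusterPt y atTop x) : IsLUB (range x) y :=
  ⟨forall_mem_range.2 fun α =>
      isClosed_Ici.mem_of_mapClusterPt hy ((eventually_ge_atTop α).mono fun _ => (hx ·)),
    fun _ hb => isClosed_Iic.mem_of_mapClusterPt hy (.of_forall fun α => hb (mem_range_self α))⟩

lemma Monotone.oConvNet_of_isLUB {ι F : Type*} [Preorder ι] [Nonempty ι]
    [IsDirected ι (· ≤ ·)] [Lattice F] [AddCommGroup F] [IsOrderedAddMonoid F] {x : ι → F}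
    (hx : Monotone x) {y : F} (hy : IsLUB (range x) y) : OConvNet x y := by
  refine ⟨range fun α => y - x α, range_nonempty _, ?_, ?_, ?_⟩
  · rintro _ ⟨α, rfl⟩ _ ⟨β, rfl⟩
    obtain ⟨γ, hαγ, hβγ⟩ := exists_ge_ge α β
    exact ⟨y - x γ, mem_range_self γ, sub_le_sub_left (hx hαγ) y, sub_le_sub_left (hx hβγ) y⟩
  · have := (isGLB_singleton (a := y)).sub hy
    rwa [singleton_sub, sub_self, ← range_comp] at this
  · rintro _ ⟨α, rfl⟩
    refine ⟨α, fun β hαβ => ?_⟩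
    rw [abs_sub_comm, abs_of_nonneg (sub_nonneg.2 (hy.1 (mem_range_self β)))]
    exact sub_le_sub_left (hx hαβ) y

lemma IsCompactOperator.exists_mapClusterPt {𝕜 E F : Type*} [NontriviallyNormedField 𝕜]
    [NormedAddCommGroup E] [NormedSpace 𝕜 E] [NormedAddCommGroup F] [NormedSpace 𝕜 F]
    {S : E →ₗ[𝕜] F} (hS : IsCompactOperator S) {ι : Type*} {l : Filter ι} [l.NeBot]
    {x : ι → E} (hx : Bornology.IsBounded (range x)) : ∃ y, MapClusterPt y l (S ∘ x) := by
  obtain ⟨K, hK, hSK⟩ := hS.image_subset_compact_of_bounded hx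
  obtain ⟨y, -, hy⟩ := hK.exists_mapClusterPt (f := l) (tendsto_principal.2 <|
    .of_forall fun α => hSK ⟨x α, mem_range_self α, rfl⟩)
  exact ⟨y, hy⟩

def cqLeviSubmodule (E F : Type*) [Lattice E] [AddCommGroup E] [Norm E] [Module ℝ E] [Lattice F]
    [AddCommGroup F] [IsOrderedAddMonoid F] [Module ℝ F] [PosSMulMono ℝ F] :
    Submodule ℝ (E →ₗ[ℝ] F) where
  carrier := {T | IsCqLeviMap T}
  zero_mem' _ _ _ _ _ _ _ := ⟨0, OConvNet.const 0⟩
  add_mem' hS hT ι _ _ _ x hx hC := by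
    obtain ⟨y, hy⟩ := hS ι x hx hC
    obtain ⟨z, hz⟩ := hT ι x hx hC
    exact ⟨y + z, hy.add hz⟩
  smul_mem' c T hT ι _ _ _ x hx hC := by
    obtain ⟨y, hy⟩ := hT ι x hx hC
    exact ⟨c • y, hy.const_smul c⟩

theorem isCqLeviMap_of_nonneg_of_isCompactOperator {E F : Type*} [NormedAddCommGroup E]
    [Lattice E] [IsOrderedAddMonoid E] [NormedSpace ℝ E] [NormedAddCommGroup F] [Lattice F]
    [IsOrderedAddMonoid F] [OrderClosedTopology F] [NormedSpace ℝ F] {S : E →ₗ[ℝ] F}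
    (hpos : ∀ x, 0 ≤ x → 0 ≤ S x) (hS : IsCompactOperator S) : IsCqLeviMap S := by
  intro ι _ _ _ x hx ⟨C, hC⟩
  obtain ⟨y, hy⟩ := hS.exists_mapClusterPt (l := atTop)
    (isBounded_iff_forall_norm_le.2 ⟨C, forall_mem_range.2 hC⟩)
  have hSx : Monotone (S ∘ x) := ((monotone_iff_map_nonneg S).2 hpos).comp hx
  exact ⟨y, hSx.oConvNet_of_isLUB (hSx.isLUB_range_of_mapClusterPt hy)⟩

theorem span_positive_compact_isCqLevi_general {E F : Type*}
    [NormedAddCommGroup E] [Lattice E] [IsOrderedAddMonoid E] [NormedSpace ℝ E]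
    [NormedAddCommGroup F] [Lattice F] [IsOrderedAddMonoid F] [HasSolidNorm F] [NormedSpace ℝ F]
    (T : E →ₗ[ℝ] F)
    (hT : T ∈ Submodule.span ℝ
      {S : E →ₗ[ℝ] F | (∀ x : E, 0 ≤ x → 0 ≤ S x) ∧ IsCompactOperator (S : E → F)}) :
    IsCqLeviMap (T : E → F) :=
  Submodule.span_le (p := cqLeviSubmodule E F).2
    (fun _ hS => isCqLeviMap_of_nonneg_of_isCompactOperator hS.1 hS.2) hT

/-- every linear combination of positive compact operators between normed
lattices is a completely quasi Levi operator. -/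
theorem span_positive_compact_isCqLevi {E F : Type*}
    [NormedAddCommGroup E] [Lattice E] [IsOrderedAddMonoid E] [HasSolidNorm E] [NormedSpace ℝ E]
    [NormedAddCommGroup F] [Lattice F] [IsOrderedAddMonoid F] [HasSolidNorm F] [NormedSpace ℝ F]
    (T : E →ₗ[ℝ] F)
    (hT : T ∈ Submodule.span ℝ
      {S : E →ₗ[ℝ] F | (∀ x : E, 0 ≤ x → 0 ≤ S x) ∧ IsCompactOperator (S : E → F)}) :
    IsCqLeviMap (T : E → F) :=
  span_positive_compact_isCqLevi_general T hT
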